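/- Lemma 3 (filtered error relation for the SO(3)/DCM parameterization): let C : ℝ → ℝ^{3×3} be differentiable with C(t) ∈ SO(3) for all t, and let ω̃ : ℝ → ℝ³ satisfy Poisson's equation Ċ(t) = −ω̃(t)^× C(t). Let r, r_d : ℝ → ℝ³ be differentiable, let ω_d : ℝ → ℝ³, and set ω(t) := ω_d(t) + ω̃(t). Assume tr(C(t)) I₃ − C(t) is invertible for all t, and let Λ ∈ ℝ^{6×6} be symmetric positive definite. Define p̃(t) := (r(t) − r_d(t), 𝒫(C(t))^V) ∈ ℝ⁶, s(t) := ṗ̃(t) + Λ p̃(t), P(t) := blkdiag(I₃, −2(tr(C(t)) I₃ − C(t))⁻¹), ν(t) := (ṙ(t), ω(t)), ν_d(t) := (ṙ_d(t), ω_d(t)), and ν_r(t) := ν_d(t) − P(t) Λ p̃(t). Then ν(t) − ν_r(t) = P(t) s(t) for all t. -/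

import Mathlib

open Matrix

attribute [local instance] Matrix.normedAddCommGroup Matrix.normedSpace

/-- The cross (skew-symmetric) operator `v^×` with `v^× w = v × w`. -/
def crossMat (v : Fin 3 → ℝ) : Matrix (Fin 3) (Fin 3) ℝ :=
  !![0, -v 2, v 1; v 2, 0, -v 0; -v 1, v 0, 0]

/-- The uncross operator `(·)^V`, the inverse of `crossMat` on skew-symmetric
matrices. -/
def uncross (A : Matrix (Fin 3) (Fin 3) ℝ) : Fin 3 → ℝ := ![A 2 1, A 0 2, A 1 0]

/-- The antisymmetric projection operator `𝒫(U) = ½(U − Uᵀ)`. -/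
noncomputable def projAnti (U : Matrix (Fin 3) (Fin 3) ℝ) : Matrix (Fin 3) (Fin 3) ℝ :=
  (1 / 2 : ℝ) • (U - Uᵀ)

/-- Concatenation of two vectors in `ℝ³` into a vector in `ℝ⁶`. -/
def vcat (a b : Fin 3 → ℝ) : Fin 6 → ℝ := Fin.append a b

/-- Block-diagonal `6 × 6` matrix with `3 × 3` diagonal blocks `A` and `B`. -/
def blkdiag (A B : Matrix (Fin 3) (Fin 3) ℝ) : Matrix (Fin 6) (Fin 6) ℝ :=
  Matrix.reindex finSumFinEquiv finSumFinEquiv (Matrix.fromBlocks A 0 0 B)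

/-! The attitude part of `ṗ̃` is linear in `ω̃`: `𝒫(−ω̃^× C)^V = −½ (tr C · I₃ − C) ω̃`, so the
lower block `−2 (tr C · I₃ − C)⁻¹` of `P` recovers `ω̃ = ω − ω_d` from it, while the upper block
`I₃` passes `ṙ − ṙ_d` through; the `Λ p̃` terms cancel. -/

lemma vcat_eq_sumElim_comp (a b : Fin 3 → ℝ) : vcat a b = Sum.elim a b ∘ finSumFinEquiv.symm := by
  rw [Equiv.eq_comp_symm]
  exact Fin.append_comp_sumElim

lemma vcat_sub (a b c d : Fin 3 → ℝ) : vcat a b - vcat c d = vcat (a - c) (b - d) := by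
  simp only [vcat_eq_sumElim_comp, Sum.elim_sub_sub, Pi.sub_comp]

lemma blkdiag_mulVec_vcat (A B : Matrix (Fin 3) (Fin 3) ℝ) (a b : Fin 3 → ℝ) :
    blkdiag A B *ᵥ vcat a b = vcat (A *ᵥ a) (B *ᵥ b) := by
  rw [blkdiag, reindex_apply, submatrix_mulVec_equiv, vcat_eq_sumElim_comp, vcat_eq_sumElim_comp,
    Equiv.symm_symm, Function.comp_assoc, Equiv.symm_comp_self, Function.comp_id, fromBlocks_mulVec]
  simp

lemma uncross_projAnti_neg_crossMat_mul (a : Fin 3 → ℝ) (B : Matrix (Fin 3) (Fin 3) ℝ) :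
    uncross (projAnti (-(crossMat a * B))) = (-(1 / 2) : ℝ) • ((B.trace • 1 - B) *ᵥ a) := by
  ext i
  fin_cases i <;>
    simp [uncross, projAnti, crossMat, mulVec, vecMul, dotProduct, Fin.sum_univ_three,
      trace, Matrix.one_apply] <;> ring

lemma neg_two_smul_inv_mulVec_uncross_projAnti_neg_crossMat_mul (a : Fin 3 → ℝ)
    {B : Matrix (Fin 3) (Fin 3) ℝ} (hB : IsUnit (B.trace • 1 - B).det) :
    (-(2 : ℝ) • (B.trace • 1 - B)⁻¹) *ᵥ uncross (projAnti (-(crossMat a * B))) = a := by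
  rw [uncross_projAnti_neg_crossMat_mul, mulVec_smul, smul_mulVec, mulVec_mulVec,
    nonsing_inv_mul _ hB, one_mulVec, smul_smul]
  norm_num

theorem filtered_error_SO3_general
    (C : ℝ → Matrix (Fin 3) (Fin 3) ℝ)
    (ωtil ωd ω : ℝ → Fin 3 → ℝ)
    (r' rd' : ℝ → Fin 3 → ℝ)
    (Λ : Matrix (Fin 6) (Fin 6) ℝ)
    (hω : ∀ t, ω t = ωd t + ωtil t)
    (hinv : ∀ t,
      IsUnit ((Matrix.trace (C t)) • (1 : Matrix (Fin 3) (Fin 3) ℝ) - C t).det)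
    (ptil s ν νd νr : ℝ → Fin 6 → ℝ)
    (P : ℝ → Matrix (Fin 6) (Fin 6) ℝ)
    (hsdef : ∀ t, s t =
      vcat (r' t - rd' t) (uncross (projAnti (-(crossMat (ωtil t) * C t)))) +
        Λ *ᵥ ptil t)
    (hP : ∀ t, P t = blkdiag 1
      (-(2 : ℝ) • ((Matrix.trace (C t)) • (1 : Matrix (Fin 3) (Fin 3) ℝ) - C t)⁻¹))
    (hν : ∀ t, ν t = vcat (r' t) (ω t))
    (hνd : ∀ t, νd t = vcat (rd' t) (ωd t))
    (hνr : ∀ t, νr t = νd t - P t *ᵥ (Λ *ᵥ ptil t)) :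
    ∀ t, ν t - νr t = P t *ᵥ s t := by
  intro t
  have hvel : vcat (r' t) (ω t) - vcat (rd' t) (ωd t) = vcat (r' t - rd' t) (ωtil t) := by
    rw [vcat_sub, hω, add_sub_cancel_left]
  rw [hνr, hν, hνd, hsdef, mulVec_add, hP, blkdiag_mulVec_vcat, one_mulVec,
    neg_two_smul_inv_mulVec_uncross_projAnti_neg_crossMat_mul _ (hinv t), ← hvel]
  abel

/-- **Lemma 3 (filtered error relation for the SO(3)/DCM parameterization).**
With `C ∈ SO(3)` satisfying Poisson's equation `Ċ = −ω̃^× C`, `ω = ω_d + ω̃`,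
`tr(C) I₃ − C` invertible, pose error `p̃ = (r − r_d, 𝒫(C)^V)`, filtered error
`s = ṗ̃ + Λ p̃` (the attitude rate being `𝒫(Ċ)^V` by linearity),
`P = blkdiag(I₃, −2(tr(C) I₃ − C)⁻¹)`, `ν = (ṙ, ω)`, `ν_d = (ṙ_d, ω_d)`, and
`ν_r = ν_d − P Λ p̃`, one has `ν − ν_r = P s` for all `t`. -/
theorem filtered_error_SO3
    (C : ℝ → Matrix (Fin 3) (Fin 3) ℝ)
    (ωtil ωd ω : ℝ → Fin 3 → ℝ)
    (r r' rd rd' : ℝ → Fin 3 → ℝ)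
    (Λ : Matrix (Fin 6) (Fin 6) ℝ) (hΛ : Λ.PosDef)
    (hSO3 : ∀ t, (C t)ᵀ * C t = 1 ∧ (C t).det = 1)
    (hC : ∀ t, HasDerivAt C (-(crossMat (ωtil t) * C t)) t)
    (hr : ∀ t, HasDerivAt r (r' t) t)
    (hrd : ∀ t, HasDerivAt rd (rd' t) t)
    (hω : ∀ t, ω t = ωd t + ωtil t)
    (hinv : ∀ t,
      IsUnit ((Matrix.trace (C t)) • (1 : Matrix (Fin 3) (Fin 3) ℝ) - C t).det)
    (ptil s ν νd νr : ℝ → Fin 6 → ℝ)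
    (P : ℝ → Matrix (Fin 6) (Fin 6) ℝ)
    (hptil : ∀ t, ptil t = vcat (r t - rd t) (uncross (projAnti (C t))))
    (hsdef : ∀ t, s t =
      vcat (r' t - rd' t) (uncross (projAnti (-(crossMat (ωtil t) * C t)))) +
        Λ *ᵥ ptil t)
    (hP : ∀ t, P t = blkdiag 1
      (-(2 : ℝ) • ((Matrix.trace (C t)) • (1 : Matrix (Fin 3) (Fin 3) ℝ) - C t)⁻¹))
    (hν : ∀ t, ν t = vcat (r' t) (ω t))
    (hνd : ∀ t, νd t = vcat (rd' t) (ωd t))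
    (hνr : ∀ t, νr t = νd t - P t *ᵥ (Λ *ᵥ ptil t)) :
    ∀ t, ν t - νr t = P t *ᵥ s t :=
  filtered_error_SO3_general C ωtil ωd ω r' rd' Λ hω hinv ptil s ν νd νr P hsdef hP hν hνd hνr
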